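/- Let γ be a permutation of [n] with orbits V₁,…,V_r, and let π be a premap on ±[n] whose join with the partition {±V₁,…,±V_r} is the full partition (i.e. the group generated by π together with the blocks ±V_k connects everything). Then χ(γ,π) := #(γ₊γ₋⁻¹)/2 + #(π)/2 + #(γ₊⁻¹π⁻¹γ₋)/2 − n ≤ 2. -/

import Mathlib

/-- `π` is a premap: conjugation by `k ↦ -k` gives `π⁻¹`, and no orbit of `π`
contains both `k` and `-k` (for `k ≠ 0`). -/
def IsPremap (π : Equiv.Perm ℤ) : Prop :=
  (Equiv.neg ℤ) * π * (Equiv.neg ℤ) = π⁻¹ ∧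
    ∀ k : ℤ, k ≠ 0 → ∀ m : ℤ, (π ^ m) k ≠ -k

/-- `γ₋ = δ γ δ`, where `δ : k ↦ -k`. -/
def permMinus (γ : Equiv.Perm ℤ) : Equiv.Perm ℤ :=
  (Equiv.neg ℤ) * γ * (Equiv.neg ℤ)

/-- The number of orbits of `σ` meeting the set `S`. -/
noncomputable def orbitCountOn (σ : Equiv.Perm ℤ) (S : Set ℤ) : ℕ :=
  Nat.card (Quot (fun a b : S => σ.SameCycle a b))

/-- The set `±I = I ∪ (-I)`. -/
def pmSet (I : Finset ℤ) : Set ℤ := {k : ℤ | k ∈ I ∨ -k ∈ I}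

/-- The Euler characteristic
`χ(γ,π) = #(γ₊γ₋⁻¹)/2 + #(π)/2 + #(γ₊⁻¹π⁻¹γ₋)/2 − |I|`,
all orbits counted on `±I`. -/
noncomputable def chi (I : Finset ℤ) (γ π : Equiv.Perm ℤ) : ℚ :=
  (orbitCountOn (γ * (permMinus γ)⁻¹) (pmSet I) : ℚ) / 2 +
    (orbitCountOn π (pmSet I) : ℚ) / 2 +
    (orbitCountOn (γ⁻¹ * π⁻¹ * permMinus γ) (pmSet I) : ℚ) / 2 - I.card

/-!
Put `ρ = γ₊γ₋⁻¹`. The three orbit counts in `χ(γ, π)` are those of `ρ`, of `π` and, after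
inverting and conjugating by `γ₋`, of `πρ`, all taken on `±[n]`, a set of size `2n`.

For permutations `a`, `b` supported in a finite set `S`,
`#(a) + #(b) + #(ab) ≤ |S| + 2 #⟨a, b⟩`. Induct on `|S| - #(a)`: if `a ≠ 1`, the transposition
`t = (x a(x))` splits a cycle of `a`, so `a' = t a` has one more cycle. Multiplying by a
transposition `(x y)` changes the number of cycles by exactly one (splitting when `x`, `y` share
a cycle, merging otherwise), and the orbits of `⟨a, b⟩` are those of `⟨a', b⟩` with at most
the orbits of `x` and `a(x)` joined; comparing `ab = t (a'b)` with `a'b` closes the induction.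

It remains to see that `⟨π, ρ⟩` has at most two orbits on `±[n]`. Both `π` and `ρ` are
inverted by conjugation with `k ↦ -k`, so the orbits are stable under negation, and `ρ`
agrees with `γ` on positive points. Hence each step of the join hypothesis stays within one
orbit up to sign, and every point lies in the orbit of `1` or of `-1`.
-/

open Equiv Equiv.Perm

section ClassCount

variable {α : Type*}

noncomputable def classCount (S : Finset α) (r : α → α → Prop) : ℕ :=
  Nat.card (Quot fun a b : (S : Set α) => r a b)

/-- For an equivalence `r`, the finest equivalence coarser than `r` relating `x` and `y`. -/
def pairJoin (r : α → α → Prop) (x y : α) : α → α → Prop :=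
  fun z w => r z w ∨ (r z x ∧ r y w) ∨ (r z y ∧ r x w)

variable {S : Finset α} {r r' : α → α → Prop}

theorem classCount_congr (h : ∀ a ∈ S, ∀ b ∈ S, (r a b ↔ r' a b)) :
    classCount S r = classCount S r' := by
  unfold classCount
  congr 2
  funext a b
  exact propext (h a a.2 b b.2)

theorem classCount_le_card : classCount S r ≤ S.card := by
  simpa [classCount] using Nat.card_le_card_of_surjective _
    (Quot.mk_surjective (r := fun a b : (S : Set α) => r a b))

theorem classCount_anti (h : ∀ a ∈ S, ∀ b ∈ S, r a b → r' a b) :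
    classCount S r' ≤ classCount S r :=
  Nat.card_le_card_of_surjective (Quot.map id fun a b => h a a.2 b b.2) <| by
    rintro ⟨a⟩
    exact ⟨Quot.mk _ a, rfl⟩

theorem classCount_le_two (hr : Equivalence r) {x y : α} (h : ∀ z ∈ S, r z x ∨ r z y) :
    classCount S r ≤ 2 := by
  classical
  let f : Quot (fun a b : (S : Set α) => r a b) → Bool :=
    Quot.lift (fun z => decide (r z x)) fun a b hab => by
      simp only [decide_eq_decide]
      exact ⟨hr.trans (hr.symm hab), hr.trans hab⟩
  have hf : Function.Injective f := by
    rintro ⟨a⟩ ⟨b⟩ hab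
    simp only [f, decide_eq_decide] at hab
    refine Quot.sound ?_
    by_cases ha : r a x
    · exact hr.trans ha (hr.symm (hab.mp ha))
    · exact hr.trans ((h a a.2).resolve_left ha)
        (hr.symm ((h b b.2).resolve_left (hab.not.mp ha)))
  exact (Nat.card_le_card_of_injective f hf).trans_eq (by simp)

theorem pairJoin_equivalence (hr : Equivalence r) (x y : α) : Equivalence (pairJoin r x y) where
  refl z := Or.inl (hr.refl z)
  symm := by grind [pairJoin, Equivalence]
  trans := by grind [pairJoin, Equivalence]

theorem pairJoin_le {r'' : α → α → Prop} (hr'' : Equivalence r'') (h : ∀ z w, r z w → r'' z w)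
    {x y z w : α} (hxy : r'' x y) (hzw : pairJoin r x y z w) : r'' z w := by
  grind [pairJoin, Equivalence]

theorem classCount_pairJoin_add_one (hr : Equivalence r) {x y : α} (hx : x ∈ S) (hy : y ∈ S)
    (hxy : ¬r x y) : classCount S (pairJoin r x y) + 1 = classCount S r := by
  classical
  set R := fun a b : (S : Set α) => r a b
  have hR : Equivalence R := hr.comap Subtype.val
  have hR' := (pairJoin_equivalence hr x y).comap (Subtype.val : ↥(S : Set α) → α)
  let qy : Quot R := Quot.mk R ⟨y, hy⟩
  let g : {q : Quot R // q ≠ qy} → Quot fun a b : (S : Set α) => pairJoin r x y a b :=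
    fun q => Quot.map id (fun _ _ h => Or.inl h) q.1
  have hg : Function.Bijective g := by
    constructor
    · rintro ⟨⟨a⟩, ha⟩ ⟨⟨b⟩, hb⟩ hab
      simp only [qy, ne_eq, hR.quot_mk_eq_iff] at ha hb
      simp only [g, Quot.map, id, hR'.quot_mk_eq_iff] at hab
      rcases hab with h | ⟨-, h⟩ | ⟨h, -⟩
      · exact Subtype.ext (Quot.sound h)
      · exact absurd (hr.symm h) hb
      · exact absurd h ha
    · rintro ⟨a⟩
      by_cases ha : r a y
      · refine ⟨⟨Quot.mk R ⟨x, hx⟩, fun h => hxy ((hR.quot_mk_eq_iff _ _).mp h)⟩, Quot.sound ?_⟩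
        exact Or.inr (Or.inl ⟨hr.refl x, hr.symm ha⟩)
      · exact ⟨⟨Quot.mk R a, fun h => ha ((hR.quot_mk_eq_iff _ _).mp h)⟩, rfl⟩
  calc classCount S (pairJoin r x y) + 1 = Nat.card {q : Quot R // q ≠ qy} + 1 := by
        rw [classCount, Nat.card_eq_of_bijective g hg]
    _ = Nat.card (Option {q : Quot R // q ≠ qy}) := Finite.card_option.symm
    _ = classCount S r := Nat.card_congr (Equiv.optionSubtypeNe qy)

end ClassCount

namespace Equiv.Perm

variable {α : Type*} {S : Finset α} {σ : Perm α} {x y z w : α} {r : α → α → Prop}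

theorem SameCycle.rel_of_forall_apply (hr : Equivalence r) (h : ∀ u, r u (σ u))
    (hzw : σ.SameCycle z w) : r z w := by
  obtain ⟨i, rfl⟩ := hzw
  induction i using Int.induction_on with
  | zero => exact hr.refl z
  | succ i ih =>
    rw [add_comm, zpow_add, zpow_one, mul_apply]
    exact hr.trans ih (h _)
  | pred i ih =>
    rw [sub_eq_neg_add, zpow_add, zpow_neg_one, mul_apply]
    refine hr.trans ih (hr.symm ?_)
    simpa using h (σ⁻¹ ((σ ^ (-(i : ℤ))) z))

theorem exists_pow_lt_of_sameCycle {k : ℕ} (hk : 0 < k) (hkz : (σ ^ k) z = z)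
    (h : σ.SameCycle z w) : ∃ j < k, (σ ^ j) z = w := by
  obtain ⟨i, rfl⟩ := h
  have hmod : 0 ≤ i % k := Int.emod_nonneg i (by omega)
  refine ⟨(i % k).toNat, (Int.toNat_lt_of_ne_zero hk.ne').2 (Int.emod_lt_of_pos i (by omega)), ?_⟩
  have hfix : Function.IsFixedPt ⇑(σ ^ (k : ℤ)) z := by rwa [zpow_natCast]
  conv_rhs => rw [← Int.emod_add_mul_ediv i k, zpow_add, zpow_mul, mul_apply, hfix.perm_zpow]
  rw [← zpow_natCast, Int.toNat_of_nonneg hmod]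

theorem SameCycle.mul_of_disjoint {f g : Perm α} (hfg : f.Disjoint g) (hz : g z = z)
    (h : f.SameCycle z w) : (f * g).SameCycle z w := by
  obtain ⟨i, rfl⟩ := h
  exact ⟨i, by rw [hfg.commute.mul_zpow, mul_apply, (Function.IsFixedPt.perm_zpow hz i).eq]⟩

theorem mem_fixingSubgroup_compl_iff :
    σ ∈ fixingSubgroup (Perm α) (S : Set α)ᶜ ↔ ∀ x ∉ S, σ x = x := by
  simp [mem_fixingSubgroup_iff]

theorem apply_mem_iff_of_mem_fixingSubgroup (hσ : σ ∈ fixingSubgroup (Perm α) (S : Set α)ᶜ)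
    (x : α) : σ x ∈ S ↔ x ∈ S := by
  rw [mem_fixingSubgroup_compl_iff] at hσ
  by_cases hx : x ∈ S
  · refine iff_of_true (by_contra fun h => ?_) hx
    exact h (by rwa [σ.injective (hσ _ h)])
  · rw [hσ x hx]

theorem classCount_sameCycle_conj {g : Perm α} (hg : g ∈ fixingSubgroup (Perm α) (S : Set α)ᶜ) :
    classCount S (g * σ * g⁻¹).SameCycle = classCount S σ.SameCycle :=
  Nat.card_congr <| Quot.congr
    (g⁻¹.subtypeEquiv fun z => (apply_mem_iff_of_mem_fixingSubgroup (inv_mem hg) z).symm)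
    fun _ _ => sameCycle_conj

theorem classCount_sameCycle_inv : classCount S σ⁻¹.SameCycle = classCount S σ.SameCycle :=
  classCount_congr fun _ _ _ _ => sameCycle_inv

/-- Two points lie in the same orbit of the group generated by `a` and `b`. -/
def SameOrbit (a b : Perm α) : α → α → Prop :=
  Relation.EqvGen fun z w => a.SameCycle z w ∨ b.SameCycle z w

variable {a b : Perm α}

theorem SameOrbit.equivalence (a b : Perm α) : Equivalence (SameOrbit a b) :=
  Relation.EqvGen.is_equivalence _

theorem SameCycle.sameOrbit_left (h : a.SameCycle z w) : SameOrbit a b z w :=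
  .rel _ _ (Or.inl h)

theorem SameCycle.sameOrbit_right (h : b.SameCycle z w) : SameOrbit a b z w :=
  .rel _ _ (Or.inr h)

theorem SameOrbit.rel (hr : Equivalence r) (ha : ∀ z w, a.SameCycle z w → r z w)
    (hb : ∀ z w, b.SameCycle z w → r z w) (h : SameOrbit a b z w) : r z w :=
  hr.eqvGen_iff.1 <| Relation.EqvGen.mono (fun u v huv => huv.elim (ha u v) (hb u v)) _ _ h

theorem SameCycle.sameOrbit_mul (h : (a * b).SameCycle z w) : SameOrbit a b z w :=
  h.rel_of_forall_apply (SameOrbit.equivalence a b) fun u =>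
    (SameOrbit.equivalence a b).trans
      (sameCycle_apply_right.2 (SameCycle.refl b u)).sameOrbit_right
      (sameCycle_apply_right.2 (SameCycle.refl a (b u))).sameOrbit_left

section Transposition

variable [DecidableEq α]

theorem swap_mem_fixingSubgroup (hx : x ∈ S) (hy : y ∈ S) :
    swap x y ∈ fixingSubgroup (Perm α) (S : Set α)ᶜ :=
  mem_fixingSubgroup_compl_iff.2 fun _ hz =>
    swap_apply_of_ne_of_ne (by rintro rfl; exact hz hx) (by rintro rfl; exact hz hy)

theorem isOfFinOrder_of_mem_fixingSubgroup (hσ : σ ∈ fixingSubgroup (Perm α) (S : Set α)ᶜ) :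
    IsOfFinOrder σ := by
  have hfix := mem_fixingSubgroup_compl_iff.1 hσ
  rw [← ofSubtype_subtypePerm (apply_mem_iff_of_mem_fixingSubgroup hσ)
    fun x hx => by_contra fun h => hx (hfix x h)]
  exact ofSubtype.isOfFinOrder (isOfFinOrder_of_finite _)

theorem pairJoin_swap_apply (hr : Equivalence r) (h : r z w) : pairJoin r x y z (swap x y w) := by
  rcases eq_or_ne w x with rfl | hx
  · rw [swap_apply_left]
    exact Or.inr (Or.inl ⟨h, hr.refl y⟩)
  rcases eq_or_ne w y with rfl | hy
  · rw [swap_apply_right]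
    exact Or.inr (Or.inr ⟨h, hr.refl _⟩)
  rw [swap_apply_of_ne_of_ne hx hy]
  exact Or.inl h

theorem SameCycle.pairJoin_of_swap_mul_of_rel_apply (hr : Equivalence r) (h : ∀ u, r u (σ u))
    (hzw : (swap x y * σ).SameCycle z w) : pairJoin r x y z w :=
  hzw.rel_of_forall_apply (pairJoin_equivalence hr x y) fun u =>
    pairJoin_swap_apply (w := σ u) hr (h u)

theorem SameCycle.pairJoin_of_swap_mul (h : (swap x y * σ).SameCycle z w) :
    pairJoin σ.SameCycle x y z w :=
  h.pairJoin_of_swap_mul_of_rel_apply (SameCycle.equivalence σ) fun u =>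
    sameCycle_apply_right.2 (SameCycle.refl σ u)

theorem SameCycle.pairJoin_swap_mul (h : σ.SameCycle z w) :
    pairJoin (swap x y * σ).SameCycle x y z w := by
  rw [← swap_mul_self_mul x y σ] at h
  exact h.pairJoin_of_swap_mul

theorem sameCycle_iff_pairJoin_swap_mul (h : σ.SameCycle x y) :
    σ.SameCycle z w ↔ pairJoin (swap x y * σ).SameCycle x y z w :=
  ⟨SameCycle.pairJoin_swap_mul, pairJoin_le (SameCycle.equivalence σ)
    (fun _ _ h' => pairJoin_le (SameCycle.equivalence σ) (fun _ _ => id) h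
      h'.pairJoin_of_swap_mul) h⟩

theorem swap_mul_pow_apply {k : ℕ}
    (h : ∀ j, 0 < j → j < k → (σ ^ j) z ≠ x ∧ (σ ^ j) z ≠ y) :
    ∀ j, 0 < j → j ≤ k → ((swap x y * σ) ^ j) z = swap x y ((σ ^ j) z)
  | 0, hj, _ => absurd hj (lt_irrefl 0)
  | 1, _, _ => rfl
  | j + 2, _, hjk => by
    have hj := h (j + 1) (Nat.succ_pos j) (by omega)
    rw [pow_succ', mul_apply, swap_mul_pow_apply h (j + 1) (Nat.succ_pos j) (by omega),
      swap_apply_of_ne_of_ne hj.1 hj.2, mul_apply, ← mul_apply σ, ← pow_succ']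

theorem sameCycle_swap_mul_of_not_sameCycle (hσ : IsOfFinOrder σ) (h : ¬σ.SameCycle x y) :
    (swap x y * σ).SameCycle x y := by
  classical
  have hex : ∃ k, 0 < k ∧ (σ ^ k) y = y :=
    ⟨orderOf σ, hσ.orderOf_pos, by rw [pow_orderOf_eq_one, one_apply]⟩
  obtain ⟨hk, hky⟩ := Nat.find_spec hex
  -- `swap x y * σ` runs along the `σ`-cycle of `y`, which avoids `x`, and ends by jumping to `x`.
  have htrace := swap_mul_pow_apply (x := x) (k := Nat.find hex) fun j hj hjk =>
    ⟨fun hjx => h (hjx ▸ sameCycle_pow_right.2 (SameCycle.refl σ y)).symm,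
      fun hjy => Nat.find_min hex hjk ⟨hj, hjy⟩⟩
  refine SameCycle.symm ⟨Nat.find hex, ?_⟩
  rw [zpow_natCast, htrace _ hk le_rfl, hky, swap_apply_right]

theorem not_sameCycle_swap_mul_of_sameCycle (hσ : IsOfFinOrder σ) (hxy : x ≠ y)
    (h : σ.SameCycle x y) : ¬(swap x y * σ).SameCycle x y := by
  classical
  have hex : ∃ k, 0 < k ∧ (σ ^ k) x = y := by
    obtain ⟨k, -, hk⟩ := exists_pow_lt_of_sameCycle hσ.orderOf_pos
      (by rw [pow_orderOf_eq_one, one_apply]) h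
    exact ⟨k, Nat.pos_of_ne_zero (by rintro rfl; exact hxy hk), hk⟩
  set k := Nat.find hex
  obtain ⟨hk, hkx⟩ := Nat.find_spec hex
  have hmin : ∀ j, 0 < j → j < k → (σ ^ j) x ≠ y := fun j hj hjk hjy =>
    Nat.find_min hex hjk ⟨hj, hjy⟩
  have hret : ∀ j, 0 < j → j < k → (σ ^ j) x ≠ x := fun j hj hjk hjx =>
    hmin (k - j) (by omega) (by omega) <| calc
      (σ ^ (k - j)) x = (σ ^ (k - j)) ((σ ^ j) x) := by rw [hjx]
      _ = (σ ^ k) x := by rw [← mul_apply, ← pow_add, Nat.sub_add_cancel hjk.le]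
      _ = y := hkx
  -- `swap x y * σ` runs through `x, σ x, …, σ^(k-1) x` and then back to `x`, never meeting `y`.
  have htrace := swap_mul_pow_apply fun j hj hjk => ⟨hret j hj hjk, hmin j hj hjk⟩
  intro hsc
  obtain ⟨j, hjk, hj⟩ := exists_pow_lt_of_sameCycle hk
    (by rw [htrace k hk le_rfl, hkx, swap_apply_right]) hsc
  rcases j.eq_zero_or_pos with rfl | hj0
  · exact hxy hj
  · rw [htrace j hj0 hjk.le, swap_apply_of_ne_of_ne (hret j hj0 hjk) (hmin j hj0 hjk)] at hj
    exact hmin j hj0 hjk hj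

theorem classCount_swap_mul_of_sameCycle (hσ : IsOfFinOrder σ) (hx : x ∈ S) (hy : y ∈ S)
    (hxy : x ≠ y) (h : σ.SameCycle x y) :
    classCount S (swap x y * σ).SameCycle = classCount S σ.SameCycle + 1 := by
  rw [classCount_congr fun z _ w _ => sameCycle_iff_pairJoin_swap_mul h (z := z) (w := w),
    classCount_pairJoin_add_one (SameCycle.equivalence _) hx hy
      (not_sameCycle_swap_mul_of_sameCycle hσ hxy h)]

theorem classCount_swap_mul_add_one_of_not_sameCycle (hσ : IsOfFinOrder σ) (hx : x ∈ S)
    (hy : y ∈ S) (h : ¬σ.SameCycle x y) :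
    classCount S (swap x y * σ).SameCycle + 1 = classCount S σ.SameCycle := by
  have h' := sameCycle_swap_mul_of_not_sameCycle hσ h
  rw [classCount_congr fun z _ w _ => by
      rw [sameCycle_iff_pairJoin_swap_mul h', swap_mul_self_mul],
    classCount_pairJoin_add_one (SameCycle.equivalence _) hx hy h]

theorem classCount_swap_mul_le (hσ : IsOfFinOrder σ) (hx : x ∈ S) (hy : y ∈ S) (hxy : x ≠ y) :
    classCount S (swap x y * σ).SameCycle ≤ classCount S σ.SameCycle + 1 := by
  by_cases h : σ.SameCycle x y
  · exact (classCount_swap_mul_of_sameCycle hσ hx hy hxy h).le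
  · have := classCount_swap_mul_add_one_of_not_sameCycle hσ hx hy h
    omega

theorem classCount_swap_mul_mul_add_le (ha : a ∈ fixingSubgroup (Perm α) (S : Set α)ᶜ)
    (hb : b ∈ fixingSubgroup (Perm α) (S : Set α)ᶜ) (hx : x ∈ S) (hy : y ∈ S) (hxy : x ≠ y) :
    classCount S (swap x y * a * b).SameCycle + 2 * classCount S (SameOrbit a b) ≤
      classCount S (a * b).SameCycle + 1 + 2 * classCount S (SameOrbit (swap x y * a) b) := by
  have hab := isOfFinOrder_of_mem_fixingSubgroup (mul_mem ha hb)
  have hE := SameOrbit.equivalence a b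
  have hsub : ∀ z w, SameOrbit (swap x y * a) b z w → pairJoin (SameOrbit a b) x y z w :=
    fun _ _ => SameOrbit.rel (pairJoin_equivalence hE x y)
      (fun _ _ h => h.pairJoin_of_swap_mul_of_rel_apply hE fun u =>
        (sameCycle_apply_right.2 (SameCycle.refl a u)).sameOrbit_left)
      (fun _ _ h => Or.inl h.sameOrbit_right)
  rw [mul_assoc]
  by_cases hc : SameOrbit a b x y
  · have h₁ := classCount_swap_mul_le hab hx hy hxy
    have h₂ : classCount S (SameOrbit a b) ≤ classCount S (SameOrbit (swap x y * a) b) :=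
      classCount_anti fun z _ w _ h => pairJoin_le hE (fun _ _ => id) hc (hsub z w h)
    omega
  · have h₁ := classCount_swap_mul_add_one_of_not_sameCycle hab hx hy
      fun h => hc h.sameOrbit_mul
    have h₂ := classCount_pairJoin_add_one hE hx hy hc
    have h₃ : classCount S (pairJoin (SameOrbit a b) x y) ≤
        classCount S (SameOrbit (swap x y * a) b) :=
      classCount_anti fun z _ w _ => hsub z w
    omega

theorem classCount_sameCycle_add_le {a : Perm α} (ha : a ∈ fixingSubgroup (Perm α) (S : Set α)ᶜ)
    (hb : b ∈ fixingSubgroup (Perm α) (S : Set α)ᶜ) :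
    classCount S a.SameCycle + classCount S b.SameCycle + classCount S (a * b).SameCycle ≤
      S.card + 2 * classCount S (SameOrbit a b) := by
  by_cases h1 : a = 1
  · subst h1
    have h₁ : classCount S b.SameCycle ≤ classCount S (SameOrbit 1 b) :=
      classCount_anti fun _ _ _ _ => SameOrbit.rel (SameCycle.equivalence b)
        (fun _ _ h => (sameCycle_one.1 h).sameCycle b) fun _ _ => id
    have h₂ := classCount_le_card (S := S) (r := (1 : Perm α).SameCycle)
    rw [one_mul]
    omega
  obtain ⟨x, hx⟩ : ∃ x, a x ≠ x := not_forall.1 fun h => h1 (Equiv.ext h)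
  have hxS : x ∈ S := by_contra fun h => hx (mem_fixingSubgroup_compl_iff.1 ha x h)
  have haxS : a x ∈ S := (apply_mem_iff_of_mem_fixingSubgroup ha x).2 hxS
  have ha' := mul_mem (swap_mem_fixingSubgroup hxS haxS) ha
  have hsplit := classCount_swap_mul_of_sameCycle (isOfFinOrder_of_mem_fixingSubgroup ha) hxS haxS
    hx.symm (sameCycle_apply_right.2 (SameCycle.refl a x))
  have hcard := classCount_le_card (S := S) (r := (swap x (a x) * a).SameCycle)
  have IH := classCount_sameCycle_add_le ha' hb
  have hstep := classCount_swap_mul_mul_add_le ha' hb hxS haxS hx.symm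
  rw [swap_mul_self_mul] at hstep
  omega
termination_by S.card - classCount S a.SameCycle
decreasing_by omega

end Transposition

end Equiv.Perm

theorem Equivalence.or_neg_right {β : Type*} [InvolutiveNeg β] {r : β → β → Prop}
    (hr : Equivalence r) (hneg : ∀ z w, r z w → r (-z) (-w)) :
    Equivalence fun z w => r z w ∨ r z (-w) := by
  have hneg' : ∀ z w, r z (-w) → r (-z) w := fun z w h => by simpa using hneg _ _ h
  refine ⟨fun z => Or.inl (hr.refl z), ?_, ?_⟩
  · rintro z w (h | h)
    · exact Or.inl (hr.symm h)
    · exact Or.inr (hr.symm (hneg' _ _ h))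
  · rintro z w u (h | h) (g | g)
    · exact Or.inl (hr.trans h g)
    · exact Or.inr (hr.trans h g)
    · exact Or.inr (hr.trans h (hneg _ _ g))
    · exact Or.inl (hr.trans h (by simpa using hneg _ _ g))

theorem Equiv.Perm.SameCycle.neg {σ : Perm ℤ} (hσ : Equiv.neg ℤ * σ * Equiv.neg ℤ = σ⁻¹)
    {z w : ℤ} (h : σ.SameCycle z w) : σ.SameCycle (-z) (-w) := by
  have hσ' : Equiv.neg ℤ * σ * (Equiv.neg ℤ)⁻¹ = σ⁻¹ := hσ
  have h' := h.conj (g := Equiv.neg ℤ)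
  rw [hσ', sameCycle_inv] at h'
  exact h'

theorem Equiv.Perm.SameOrbit.neg {a b : Perm ℤ} (ha : Equiv.neg ℤ * a * Equiv.neg ℤ = a⁻¹)
    (hb : Equiv.neg ℤ * b * Equiv.neg ℤ = b⁻¹) {z w : ℤ} (h : SameOrbit a b z w) :
    SameOrbit a b (-z) (-w) :=
  h.rel (r := fun z w => SameOrbit a b (-z) (-w)) ((SameOrbit.equivalence a b).comap Neg.neg)
    (fun _ _ h => (h.neg ha).sameOrbit_left) fun _ _ h => (h.neg hb).sameOrbit_right

noncomputable def signedRange (n : ℕ) : Finset ℤ := (Finset.Icc (-(n : ℤ)) n).erase 0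

theorem mem_signedRange {n : ℕ} {k : ℤ} : k ∈ signedRange n ↔ 1 ≤ |k| ∧ |k| ≤ n := by
  simp only [signedRange, Finset.mem_erase, Finset.mem_Icc]
  rcases abs_cases k with ⟨h, h'⟩ | ⟨h, h'⟩ <;> rw [h] <;> omega

theorem coe_signedRange (n : ℕ) : (signedRange n : Set ℤ) = pmSet (Finset.Icc 1 n) := by
  ext k
  rw [Finset.mem_coe, mem_signedRange]
  change _ ↔ k ∈ Finset.Icc 1 (n : ℤ) ∨ -k ∈ Finset.Icc 1 (n : ℤ)
  rw [Finset.mem_Icc, Finset.mem_Icc]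
  rcases abs_cases k with ⟨h, h'⟩ | ⟨h, h'⟩ <;> rw [h] <;> omega

theorem card_signedRange (n : ℕ) : (signedRange n).card = 2 * n := by
  rw [signedRange, Finset.card_erase_of_mem (by simp), Int.card_Icc]
  omega

theorem neg_mul_mul_permMinus_inv_mul_neg (γ : Perm ℤ) :
    Equiv.neg ℤ * (γ * (permMinus γ)⁻¹) * Equiv.neg ℤ = (γ * (permMinus γ)⁻¹)⁻¹ := by
  ext k
  simp [permMinus]

section

variable {n : ℕ} {γ : Perm ℤ}

theorem mem_fixingSubgroup_signedRange (hγ : ∀ k : ℤ, ¬(1 ≤ k ∧ k ≤ (n : ℤ)) → γ k = k) :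
    γ ∈ fixingSubgroup (Perm ℤ) (signedRange n : Set ℤ)ᶜ :=
  mem_fixingSubgroup_compl_iff.2 fun k hk => hγ k fun h => hk (mem_signedRange.2 (by
    rw [abs_of_pos (by omega)]; omega))

theorem permMinus_mem_fixingSubgroup_signedRange
    (hγ : ∀ k : ℤ, ¬(1 ≤ k ∧ k ≤ (n : ℤ)) → γ k = k) :
    permMinus γ ∈ fixingSubgroup (Perm ℤ) (signedRange n : Set ℤ)ᶜ :=
  mem_fixingSubgroup_compl_iff.2 fun k hk => by
    have hk' : ¬(1 ≤ -k ∧ -k ≤ (n : ℤ)) := fun h =>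
      hk (mem_signedRange.2 (by rw [abs_of_neg (by omega)]; omega))
    simp [permMinus, hγ _ hk']

theorem permMinus_apply_of_nonneg (hγ : ∀ k : ℤ, ¬(1 ≤ k ∧ k ≤ (n : ℤ)) → γ k = k) {k : ℤ}
    (hk : 0 ≤ k) : permMinus γ k = k := by
  have hk' : ¬(1 ≤ -k ∧ -k ≤ (n : ℤ)) := by omega
  simp [permMinus, hγ _ hk']

theorem disjoint_permMinus_inv (hγ : ∀ k : ℤ, ¬(1 ≤ k ∧ k ≤ (n : ℤ)) → γ k = k) :
    γ.Disjoint (permMinus γ)⁻¹ := fun k => by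
  rcases le_or_gt 0 k with hk | hk
  · exact Or.inr (inv_eq_iff_eq.2 (permMinus_apply_of_nonneg hγ hk).symm)
  · exact Or.inl (hγ k (by omega))

theorem classCount_sameOrbit_le_two {π : Perm ℤ}
    (hγ : ∀ k : ℤ, ¬(1 ≤ k ∧ k ≤ (n : ℤ)) → γ k = k)
    (hπ : Equiv.neg ℤ * π * Equiv.neg ℤ = π⁻¹)
    (hjoin : ∀ a b : ℤ, (1 ≤ |a| ∧ |a| ≤ (n : ℤ)) → (1 ≤ |b| ∧ |b| ≤ (n : ℤ)) →
      Relation.EqvGen (fun x y => π.SameCycle x y ∨ γ.SameCycle |x| |y|) a b) :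
    classCount (signedRange n) (SameOrbit π (γ * (permMinus γ)⁻¹)) ≤ 2 := by
  set ρ := γ * (permMinus γ)⁻¹
  have hE := SameOrbit.equivalence π ρ
  have hE' := hE.or_neg_right fun _ _ => SameOrbit.neg hπ (neg_mul_mul_permMinus_inv_mul_neg γ)
  have habs : ∀ x : ℤ, SameOrbit π ρ x |x| ∨ SameOrbit π ρ x (-|x|) := fun x => by
    rcases abs_cases x with ⟨h, -⟩ | ⟨h, -⟩ <;> rw [h]
    · exact Or.inl (hE.refl x)
    · exact Or.inr (by rw [neg_neg]; exact hE.refl x)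
  have hstep : ∀ x y, (π.SameCycle x y ∨ γ.SameCycle |x| |y|) →
      SameOrbit π ρ x y ∨ SameOrbit π ρ x (-y) := by
    rintro x y (h | h)
    · exact Or.inl h.sameOrbit_left
    · have hfix : (permMinus γ)⁻¹ |x| = |x| :=
        inv_eq_iff_eq.2 (permMinus_apply_of_nonneg hγ (abs_nonneg x)).symm
      have hρ := (h.mul_of_disjoint (disjoint_permMinus_inv hγ) hfix).sameOrbit_right (a := π)
      exact hE'.trans (habs x) (hE'.trans (Or.inl hρ) (hE'.symm (habs y)))
  refine classCount_le_two hE (x := 1) (y := -1) fun z hz => ?_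
  have hz' := mem_signedRange.1 hz
  have h1 : (1 : ℤ) ≤ |1| ∧ |(1 : ℤ)| ≤ n := by rw [abs_one]; omega
  exact hE'.eqvGen_iff.1 (Relation.EqvGen.mono hstep _ _ (hjoin z 1 hz' h1))

end

/-- if `γ ∈ S([n])` has orbits `V₁,…,V_r` and the premap `π` on
`±[n]` joins the blocks `±V₁,…,±V_r` into the full partition, then
`χ(γ,π) ≤ 2`. -/
theorem statement6 (n : ℕ) (γ π : Equiv.Perm ℤ)
    (hγ : ∀ k : ℤ, ¬(1 ≤ k ∧ k ≤ (n : ℤ)) → γ k = k)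
    (hπ : IsPremap π)
    (hπsupp : ∀ k : ℤ, ¬(1 ≤ |k| ∧ |k| ≤ (n : ℤ)) → π k = k)
    (hjoin : ∀ a b : ℤ, (1 ≤ |a| ∧ |a| ≤ (n : ℤ)) → (1 ≤ |b| ∧ |b| ≤ (n : ℤ)) →
      Relation.EqvGen (fun x y => π.SameCycle x y ∨ γ.SameCycle |x| |y|) a b) :
    chi (Finset.Icc 1 (n : ℤ)) γ π ≤ 2 := by
  set S := signedRange n
  set ρ := γ * (permMinus γ)⁻¹
  have hminusS := permMinus_mem_fixingSubgroup_signedRange hγ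
  have hπS : π ∈ fixingSubgroup (Perm ℤ) (S : Set ℤ)ᶜ :=
    mem_fixingSubgroup_compl_iff.2 fun k hk => hπsupp k (mt mem_signedRange.2 hk)
  have hρS : ρ ∈ fixingSubgroup (Perm ℤ) (S : Set ℤ)ᶜ :=
    mul_mem (mem_fixingSubgroup_signedRange hγ) (inv_mem hminusS)
  have hgenus := classCount_sameCycle_add_le hπS hρS
  have horbits : classCount S (SameOrbit π ρ) ≤ 2 := classCount_sameOrbit_le_two hγ hπ.1 hjoin
  have hdual : classCount S (γ⁻¹ * π⁻¹ * permMinus γ).SameCycle =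
      classCount S (π * ρ).SameCycle := by
    rw [← classCount_sameCycle_inv, ← classCount_sameCycle_conj (σ := π * ρ) (inv_mem hminusS)]
    congr 2
    simp only [ρ]
    group
  have hcount : ∀ σ, orbitCountOn σ (pmSet (Finset.Icc 1 n)) = classCount S σ.SameCycle :=
    fun σ => by rw [← coe_signedRange]; rfl
  rw [card_signedRange] at hgenus
  have hsum : (classCount S ρ.SameCycle + classCount S π.SameCycle +
      classCount S (π * ρ).SameCycle : ℚ) ≤ 2 * n + 4 := by exact_mod_cast (by omega)
  rw [chi, hcount, hcount, hcount, hdual, Int.card_Icc, add_sub_cancel_right, Int.toNat_natCast]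
  linarith
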